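/- Let k be a positive natural number, Q a symmetric positive-definite real k×k matrix, and σ > 0. Let p_x be a probability density on ℝ^k (nonnegative, measurable, integrating to 1), and for x, y ∈ ℝ^k let g(y; x) = (2π σ²)^{-k/2} (det Q)^{-1/2} exp(−(1/(2σ²)) ⟨y − x, Q⁻¹ (y − x)⟩) be the density of the Gaussian N(x, σ²Q). Define p_y(y) = ∫_{ℝ^k} g(y; x) p_x(x) dx and assume p_y(y) > 0 at a point y ∈ ℝ^k and that ∫ ‖x‖ g(y;x) p_x(x) dx < ∞. Then the gradient of log p_y at y exists and satisfies ∇_y log p_y(y) = (1/σ²) Q⁻¹ ( m(y) − y ), where m(y) = (∫_{ℝ^k} x g(y; x) p_x(x) dx) / p_y(y) is the posterior mean of x given y (generalized Tweedie's formula). -/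

import Mathlib

open MeasureTheory
open scoped RealInnerProductSpace

set_option maxHeartbeats 1000000 in
/-- **Generalized Tweedie's formula.** For `y = x + σ z` with `z ~ N(0, Q)`,
the score of the mixture density `p_y` satisfies
`∇_y log p_y(y) = σ⁻² Q⁻¹ (E[x|y] - y)`. -/
theorem tweedie_generalized
    (k : ℕ) (hk : 0 < k)
    (Q : Matrix (Fin k) (Fin k) ℝ) (hQsymm : Q.IsSymm) (hQ : Q.PosDef)
    (σ : ℝ) (hσ : 0 < σ)
    (px : EuclideanSpace ℝ (Fin k) → ℝ)
    (hpx_meas : Measurable px)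
    (hpx_nonneg : ∀ x, 0 ≤ px x)
    (hpx_int : ∫ x, px x = 1)
    (g : EuclideanSpace ℝ (Fin k) → EuclideanSpace ℝ (Fin k) → ℝ)
    (hg : ∀ y x, g y x =
      (2 * Real.pi * σ ^ 2) ^ (-(k : ℝ) / 2) * Q.det ^ (-(1 : ℝ) / 2) *
        Real.exp (-(1 / (2 * σ ^ 2)) * ⟪y - x, Matrix.toEuclideanLin Q⁻¹ (y - x)⟫))
    (py : EuclideanSpace ℝ (Fin k) → ℝ)
    (hpy_def : ∀ y, py y = ∫ x, g y x * px x)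
    (y : EuclideanSpace ℝ (Fin k))
    (hpos : 0 < py y)
    (hint : Integrable fun x : EuclideanSpace ℝ (Fin k) => ‖x‖ * (g y x * px x))
    (m : EuclideanSpace ℝ (Fin k))
    (hm : m = (py y)⁻¹ • ∫ x, (g y x * px x) • x) :
    HasGradientAt (fun y' => Real.log (py y'))
      ((σ ^ 2)⁻¹ • Matrix.toEuclideanLin Q⁻¹ (m - y)) y := by
  classical
  have hσ2 : (0:ℝ) < σ ^ 2 := by positivity
  -- the inverse matrix as a continuous linear map
  set Ac : EuclideanSpace ℝ (Fin k) →L[ℝ] EuclideanSpace ℝ (Fin k) :=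
    LinearMap.toContinuousLinearMap (Matrix.toEuclideanLin Q⁻¹) with hAc
  have hAc_apply : ∀ v : EuclideanSpace ℝ (Fin k), Ac v = Matrix.toEuclideanLin Q⁻¹ v :=
    fun v => rfl
  have hBpd : (Q⁻¹).PosDef := hQ.inv
  -- symmetry of Ac
  have hsym : ∀ u v : EuclideanSpace ℝ (Fin k), ⟪Ac u, v⟫ = ⟪u, Ac v⟫ := by
    intro u v
    exact (Matrix.isHermitian_iff_isSymmetric.1 hBpd.1) u v
  -- positivity of the quadratic form
  have hposq : ∀ v : EuclideanSpace ℝ (Fin k), v ≠ 0 → 0 < ⟪v, Ac v⟫ := by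
    intro v hv
    have h := hBpd.dotProduct_mulVec_pos (x := (WithLp.equiv 2 _) v) (by simpa using hv)
    simpa [hAc_apply, PiLp.inner_apply, Matrix.toEuclideanLin_apply, dotProduct,
      RCLike.inner_apply, mul_comm] using h
  -- smallest eigenvalue bound
  obtain ⟨lam, hlam, hquad⟩ :
      ∃ lam > 0, ∀ v : EuclideanSpace ℝ (Fin k), lam * ‖v‖ ^ 2 ≤ ⟪v, Ac v⟫ := by
    have hne : (Metric.sphere (0:EuclideanSpace ℝ (Fin k)) 1).Nonempty := by
      refine ⟨EuclideanSpace.single ⟨0, hk⟩ (1:ℝ), ?_⟩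
      rw [mem_sphere_zero_iff_norm, EuclideanSpace.norm_single]; norm_num
    have hcont : Continuous fun v : EuclideanSpace ℝ (Fin k) => ⟪v, Ac v⟫ :=
      continuous_id.inner Ac.continuous
    obtain ⟨v₀, hv₀mem, hmin⟩ :=
      (isCompact_sphere (0:EuclideanSpace ℝ (Fin k)) 1).exists_isMinOn hne hcont.continuousOn
    have hv₀ : ‖v₀‖ = 1 := by simpa using hv₀mem
    have hv₀ne : v₀ ≠ 0 := by intro h; rw [h] at hv₀; simp at hv₀
    refine ⟨⟪v₀, Ac v₀⟫, hposq _ hv₀ne, fun v => ?_⟩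
    rcases eq_or_ne v 0 with rfl | hv
    · simp
    · have hnv : (0:ℝ) < ‖v‖ := norm_pos_iff.2 hv
      have hu : ‖(‖v‖⁻¹ • v)‖ = 1 := by
        rw [norm_smul]; simp [abs_of_pos hnv, inv_mul_cancel₀ hnv.ne']
      have h1 := hmin (by rwa [mem_sphere_zero_iff_norm])
      simp only [Set.mem_setOf_eq] at h1
      have h2 : ⟪(‖v‖⁻¹ • v), Ac (‖v‖⁻¹ • v)⟫ = ‖v‖⁻¹ * (‖v‖⁻¹ * ⟪v, Ac v⟫) := by
        rw [Ac.map_smul, real_inner_smul_left, real_inner_smul_right]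
      rw [h2] at h1
      calc ⟪v₀, Ac v₀⟫ * ‖v‖ ^ 2 ≤ (‖v‖⁻¹ * (‖v‖⁻¹ * ⟪v, Ac v⟫)) * ‖v‖ ^ 2 :=
            mul_le_mul_of_nonneg_right h1 (sq_nonneg _)
        _ = ⟪v, Ac v⟫ := by rw [sq]; field_simp
  -- normalization constant
  set C : ℝ := (2 * Real.pi * σ ^ 2) ^ (-(k : ℝ) / 2) * Q.det ^ (-(1 : ℝ) / 2) with hCdef
  have hC : 0 < C :=
    mul_pos (Real.rpow_pos_of_pos (by positivity) _) (Real.rpow_pos_of_pos hQ.det_pos _)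
  have hg' : ∀ y' x : EuclideanSpace ℝ (Fin k),
      g y' x = C * Real.exp (-(1 / (2 * σ ^ 2)) * ⟪y' - x, Ac (y' - x)⟫) := by
    intro y' x
    rw [hg y' x, hAc_apply]
  have hgpos : ∀ y' x : EuclideanSpace ℝ (Fin k), 0 < g y' x := by
    intro y' x; rw [hg']; exact mul_pos hC (Real.exp_pos _)
  -- continuity of g in x
  have hgy_cont : ∀ y' : EuclideanSpace ℝ (Fin k), Continuous fun x => g y' x := by
    intro y'
    have : (fun x : EuclideanSpace ℝ (Fin k) => g y' x)
        = fun x => C * Real.exp (-(1 / (2 * σ ^ 2)) * ⟪y' - x, Ac (y' - x)⟫) :=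
      funext fun x => hg' y' x
    rw [this]
    exact continuous_const.mul (Real.continuous_exp.comp (continuous_const.mul
      ((continuous_const.sub continuous_id).inner
        (Ac.continuous.comp (continuous_const.sub continuous_id)))))
  -- basic integrabilities
  have hpx_integrable : Integrable px := by
    by_contra h
    rw [integral_undef h] at hpx_int
    norm_num at hpx_int
  have hF_int : Integrable fun x => g y x * px x := by
    by_contra h
    rw [hpy_def y, integral_undef h] at hpos
    exact lt_irrefl 0 hpos
  have hF_meas : ∀ y' : EuclideanSpace ℝ (Fin k),
      AEStronglyMeasurable (fun x => g y' x * px x) :=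
    fun y' => (hgy_cont y').aestronglyMeasurable.mul hpx_meas.aestronglyMeasurable
  have hInt1 : Integrable fun x : EuclideanSpace ℝ (Fin k) => (g y x * px x) • x := by
    refine hint.mono' ((hF_meas y).smul aestronglyMeasurable_id) ?_
    filter_upwards with x
    rw [norm_smul, Real.norm_eq_abs,
      abs_of_nonneg (mul_nonneg (hgpos y x).le (hpx_nonneg x)), mul_comm]
  -- the uniform bound on the gaussian factor
  set c : ℝ := lam / (2 * σ ^ 2) with hcdef
  have hc : 0 < c := by positivity
  have key : ∀ t : ℝ, 0 ≤ t → Real.exp (-(c * t ^ 2)) * t ≤ (2 * Real.sqrt c)⁻¹ := by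
    intro t ht
    have hsq : Real.sqrt c ^ 2 = c := Real.sq_sqrt hc.le
    have hsp : 0 < Real.sqrt c := Real.sqrt_pos.2 hc
    have h1 : 2 * Real.sqrt c * t ≤ Real.exp (c * t ^ 2) := by
      nlinarith [Real.add_one_le_exp (c * t ^ 2), sq_nonneg (Real.sqrt c * t - 1)]
    have h2 : Real.exp (-(c * t ^ 2)) * (2 * Real.sqrt c * t) ≤
        Real.exp (-(c * t ^ 2)) * Real.exp (c * t ^ 2) :=
      mul_le_mul_of_nonneg_left h1 (Real.exp_pos _).le
    rw [← Real.exp_add, neg_add_cancel, Real.exp_zero] at h2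
    have h3 : (0:ℝ) < 2 * Real.sqrt c := by positivity
    rw [inv_eq_one_div, le_div_iff₀ h3]
    nlinarith [h2]
  set M0 : ℝ := C * ‖Ac‖ * (2 * Real.sqrt c)⁻¹ with hM0def
  have hgb : ∀ y' x : EuclideanSpace ℝ (Fin k), g y' x * ‖Ac (y' - x)‖ ≤ M0 := by
    intro y' x
    have hge : g y' x ≤ C * Real.exp (-(c * ‖y' - x‖ ^ 2)) := by
      rw [hg' y' x]
      refine mul_le_mul_of_nonneg_left (Real.exp_le_exp.2 ?_) hC.le
      have e : (0:ℝ) < 1 / (2 * σ ^ 2) := by positivity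
      have h4 := mul_le_mul_of_nonneg_left (hquad (y' - x)) e.le
      have h5 : c * ‖y' - x‖ ^ 2 = 1 / (2 * σ ^ 2) * (lam * ‖y' - x‖ ^ 2) := by
        rw [hcdef]; ring
      rw [neg_mul, neg_le_neg_iff, h5]
      exact h4
    have hAcv : ‖Ac (y' - x)‖ ≤ ‖Ac‖ * ‖y' - x‖ := Ac.le_opNorm _
    calc g y' x * ‖Ac (y' - x)‖
        ≤ (C * Real.exp (-(c * ‖y' - x‖ ^ 2))) * (‖Ac‖ * ‖y' - x‖) :=
          mul_le_mul hge hAcv (norm_nonneg _) (by positivity)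
      _ = C * ‖Ac‖ * (Real.exp (-(c * ‖y' - x‖ ^ 2)) * ‖y' - x‖) := by ring
      _ ≤ C * ‖Ac‖ * (2 * Real.sqrt c)⁻¹ :=
          mul_le_mul_of_nonneg_left (key _ (norm_nonneg _)) (by positivity)
  -- differentiation under the integral sign
  have hD : HasFDerivAt (fun y' => ∫ x, g y' x * px x)
      (∫ x, (-(σ ^ 2)⁻¹ * (g y x * px x)) •
        ((InnerProductSpace.toDual ℝ (EuclideanSpace ℝ (Fin k))) (Ac (y - x)) :
          EuclideanSpace ℝ (Fin k) →L[ℝ] ℝ)) y := by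
    refine hasFDerivAt_integral_of_dominated_of_fderiv_le
      (F' := fun y' x => (-(σ ^ 2)⁻¹ * (g y' x * px x)) •
        ((InnerProductSpace.toDual ℝ (EuclideanSpace ℝ (Fin k))) (Ac (y' - x)) :
          EuclideanSpace ℝ (Fin k) →L[ℝ] ℝ))
      (bound := fun x => ((σ ^ 2)⁻¹ * M0) * px x) (Metric.ball_mem_nhds y one_pos)
      (Filter.Eventually.of_forall fun y' => hF_meas y') hF_int ?_ ?_
      ((hpx_integrable.const_mul _)) ?_
    · -- measurability of the derivative
      refine AEStronglyMeasurable.fun_smul ?_ ?_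
      · exact (((hgy_cont y).measurable.mul hpx_meas).const_mul
          (-(σ ^ 2)⁻¹)).aestronglyMeasurable
      · exact ((InnerProductSpace.toDual ℝ (EuclideanSpace ℝ (Fin k))).continuous.comp
          (Ac.continuous.comp (continuous_const.sub continuous_id))).aestronglyMeasurable
    · -- bound
      filter_upwards with x
      intro y' _
      have hq : 0 ≤ g y' x * px x := mul_nonneg (hgpos y' x).le (hpx_nonneg x)
      calc ‖(-(σ ^ 2)⁻¹ * (g y' x * px x)) •
            ((InnerProductSpace.toDual ℝ (EuclideanSpace ℝ (Fin k))) (Ac (y' - x)) :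
              EuclideanSpace ℝ (Fin k) →L[ℝ] ℝ)‖
          = ((σ ^ 2)⁻¹ * (g y' x * px x)) * ‖Ac (y' - x)‖ := by
            rw [norm_smul, LinearIsometryEquiv.norm_map, Real.norm_eq_abs, abs_mul, abs_neg,
              abs_of_nonneg (by positivity : (0:ℝ) ≤ (σ ^ 2)⁻¹), abs_of_nonneg hq]
        _ = (σ ^ 2)⁻¹ * px x * (g y' x * ‖Ac (y' - x)‖) := by ring
        _ ≤ (σ ^ 2)⁻¹ * px x * M0 := by
            refine mul_le_mul_of_nonneg_left (hgb y' x) ?_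
            have := hpx_nonneg x
            positivity
        _ = ((σ ^ 2)⁻¹ * M0) * px x := by ring
    · -- differentiability
      filter_upwards with x
      intro y' _
      have hfeq : (fun z : EuclideanSpace ℝ (Fin k) => g z x * px x)
          = fun z => C * Real.exp (-(1 / (2 * σ ^ 2)) * ⟪z - x, Ac (z - x)⟫) * px x :=
        funext fun z => by rw [hg' z x]
      rw [hfeq, hg' y' x]
      have h1 : HasFDerivAt (fun z : EuclideanSpace ℝ (Fin k) => z - x)
          (ContinuousLinearMap.id ℝ (EuclideanSpace ℝ (Fin k))) y' :=
        (hasFDerivAt_id y').sub_const x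
      have h2 := (Ac.hasFDerivAt (x := y' - x)).comp y' h1
      rw [ContinuousLinearMap.comp_id] at h2
      have h3 := (h1.inner ℝ h2).const_mul (-(1 / (2 * σ ^ 2)))
      have h6 := ((h3.exp).const_mul C).mul_const (px x)
      convert h6 using 1
      · rfl
      · rfl
      ext v
      simp only [ContinuousLinearMap.smul_apply, ContinuousLinearMap.coe_smul', Pi.smul_apply,
        ContinuousLinearMap.coe_comp', Function.comp_apply, fderivInnerCLM_apply,
        ContinuousLinearMap.prod_apply, ContinuousLinearMap.coe_id', id_eq,
        InnerProductSpace.toDual_apply_apply, smul_eq_mul]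
      have hs : ⟪y' - x, Ac v⟫ = ⟪Ac (y' - x), v⟫ := by rw [← hsym]
      rw [hs, real_inner_comm v (Ac (y' - x))]
      generalize ⟪Ac (y' - x), v⟫ = a
      generalize Real.exp (-(1 / (2 * σ ^ 2)) * ⟪y' - x, Ac (y' - x)⟫) = E
      field_simp
      ring
  -- rewrite the function as py
  rw [show (fun y' => ∫ x, g y' x * px x) = py from (funext hpy_def).symm] at hD
  -- compute the integral of the derivative
  set w : EuclideanSpace ℝ (Fin k) → EuclideanSpace ℝ (Fin k) :=
    fun x => (-(σ ^ 2)⁻¹ * (g y x * px x)) • (y - x) with hwdef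
  have e1 : Integrable fun x : EuclideanSpace ℝ (Fin k) => (g y x * px x) • (y - x) := by
    have h : (fun x : EuclideanSpace ℝ (Fin k) => (g y x * px x) • (y - x))
        = fun x => (g y x * px x) • y - (g y x * px x) • x :=
      funext fun x => smul_sub _ _ _
    rw [h]
    exact (hF_int.smul_const y).sub hInt1
  have hIntw : Integrable w := by
    have h := e1.smul ((-(σ ^ 2)⁻¹ : ℝ))
    refine h.congr ?_
    filter_upwards with x
    simp [hwdef, mul_smul]
  have hIntF' : Integrable (fun x => (-(σ ^ 2)⁻¹ * (g y x * px x)) •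
      ((InnerProductSpace.toDual ℝ (EuclideanSpace ℝ (Fin k))) (Ac (y - x)) :
        EuclideanSpace ℝ (Fin k) →L[ℝ] ℝ)) := by
    refine ((hpx_integrable.const_mul ((σ ^ 2)⁻¹ * M0)).mono' ?_ ?_)
    · refine AEStronglyMeasurable.fun_smul ?_ ?_
      · exact (((hgy_cont y).measurable.mul hpx_meas).const_mul
          (-(σ ^ 2)⁻¹)).aestronglyMeasurable
      · exact ((InnerProductSpace.toDual ℝ (EuclideanSpace ℝ (Fin k))).continuous.comp
          (Ac.continuous.comp (continuous_const.sub continuous_id))).aestronglyMeasurable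
    · filter_upwards with x
      have hq : 0 ≤ g y x * px x := mul_nonneg (hgpos y x).le (hpx_nonneg x)
      calc ‖(-(σ ^ 2)⁻¹ * (g y x * px x)) •
            ((InnerProductSpace.toDual ℝ (EuclideanSpace ℝ (Fin k))) (Ac (y - x)) :
              EuclideanSpace ℝ (Fin k) →L[ℝ] ℝ)‖
          = ((σ ^ 2)⁻¹ * (g y x * px x)) * ‖Ac (y - x)‖ := by
            rw [norm_smul, LinearIsometryEquiv.norm_map, Real.norm_eq_abs, abs_mul, abs_neg,
              abs_of_nonneg (by positivity : (0:ℝ) ≤ (σ ^ 2)⁻¹), abs_of_nonneg hq]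
        _ = (σ ^ 2)⁻¹ * px x * (g y x * ‖Ac (y - x)‖) := by ring
        _ ≤ (σ ^ 2)⁻¹ * px x * M0 := by
            refine mul_le_mul_of_nonneg_left (hgb y x) ?_
            have := hpx_nonneg x
            positivity
        _ = ((σ ^ 2)⁻¹ * M0) * px x := by ring
  have hstep1 : (∫ x, (-(σ ^ 2)⁻¹ * (g y x * px x)) •
      ((InnerProductSpace.toDual ℝ (EuclideanSpace ℝ (Fin k))) (Ac (y - x)) :
        EuclideanSpace ℝ (Fin k) →L[ℝ] ℝ))
      = (InnerProductSpace.toDual ℝ (EuclideanSpace ℝ (Fin k))) (Ac (∫ x, w x)) := by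
    ext v
    rw [ContinuousLinearMap.integral_apply hIntF']
    have hterm : ∀ x : EuclideanSpace ℝ (Fin k),
        ((-(σ ^ 2)⁻¹ * (g y x * px x)) •
          ((InnerProductSpace.toDual ℝ (EuclideanSpace ℝ (Fin k))) (Ac (y - x)) :
            EuclideanSpace ℝ (Fin k) →L[ℝ] ℝ)) v = ⟪Ac v, w x⟫ := by
      intro x
      rw [ContinuousLinearMap.smul_apply, InnerProductSpace.toDual_apply_apply]
      simp only [hwdef, smul_eq_mul]
      rw [real_inner_smul_right, hsym, real_inner_comm (y - x) (Ac v)]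
    calc (∫ x, ((-(σ ^ 2)⁻¹ * (g y x * px x)) •
          ((InnerProductSpace.toDual ℝ (EuclideanSpace ℝ (Fin k))) (Ac (y - x)) :
            EuclideanSpace ℝ (Fin k) →L[ℝ] ℝ)) v)
        = ∫ x, ⟪Ac v, w x⟫ := by congr 1; funext x; exact hterm x
      _ = ⟪Ac v, ∫ x, w x⟫ := integral_inner hIntw (Ac v)
      _ = ((InnerProductSpace.toDual ℝ (EuclideanSpace ℝ (Fin k))) (Ac (∫ x, w x))) v := by
          rw [InnerProductSpace.toDual_apply_apply, hsym, real_inner_comm]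
  -- compute ∫ w
  have hIntw_val : (∫ x, w x) = (-(σ ^ 2)⁻¹) • (py y • y - py y • m) := by
    have h0 : (∫ x, w x) = (-(σ ^ 2)⁻¹ : ℝ) • ∫ x, (g y x * px x) • (y - x) := by
      rw [← integral_smul]
      congr 1; funext x; rw [hwdef]; simp [mul_smul]
    rw [h0]
    congr 1
    have h1 : (fun x : EuclideanSpace ℝ (Fin k) => (g y x * px x) • (y - x))
        = fun x => (g y x * px x) • y - (g y x * px x) • x := funext fun x => smul_sub _ _ _
    rw [h1, integral_sub (hF_int.smul_const y) hInt1, integral_smul_const, ← hpy_def y]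
    congr 1
    rw [hm, smul_smul, mul_inv_cancel₀ hpos.ne', one_smul]
  -- take the logarithm
  have hlog := hD.log hpos.ne'
  rw [hstep1] at hlog
  have hfinal : (py y)⁻¹ • ((InnerProductSpace.toDual ℝ (EuclideanSpace ℝ (Fin k)))
        (Ac (∫ x, w x)))
      = (InnerProductSpace.toDual ℝ (EuclideanSpace ℝ (Fin k)))
        ((σ ^ 2)⁻¹ • Ac (m - y)) := by
    rw [← LinearIsometryEquiv.map_smul]
    congr 1
    have hz : Ac (m - y) = -Ac (y - m) := by rw [← map_neg, neg_sub]
    rw [hIntw_val, ← smul_sub, _root_.map_smul, _root_.map_smul, smul_smul, smul_smul,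
      show (py y)⁻¹ * -(σ ^ 2)⁻¹ * py y = -(σ ^ 2)⁻¹ from by field_simp,
      hz, smul_neg, neg_smul]
  rw [hfinal, hAc_apply] at hlog
  exact hlog
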